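/- arXiv:2112.02669 — 5 statements merged into one kernel-verified Lean document; each statement's English description precedes it below -/
import Mathlib

section
/- Let p = 1, α ∈ (0,1), and I = [t₀,t₁] or [t₀,∞). For every f ∈ L^1(I;ℝ), the Riemann–Liouville fractional integral J^α f satisfies the weak-type estimate sup_{r>0} r^{1/(1-α)} μ{t ∈ I : |J^α f(t)| > r} ≤ ( (2/(α^{1-α} Γ(α))) ‖f‖_{L^1(I)} )^{1/(1-α)}. -/
/-!
Split the kernel `(t - s) ^ (α - 1)` at `t - s = δ`. The far part contributes at most
`δ ^ (α - 1) ‖f‖₁`, which is `Γ(α) r / 2` for the right `δ`, so on the level set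
`{|J^α f| > r}` the near part exceeds `Γ(α) r / 2`. The near part is a convolution of `|f|` with
a kernel of mass `δ ^ α / α`, so Markov's inequality and Tonelli bound the level set by `δ / α`;
substituting `δ = (2 ‖f‖₁ / (Γ(α) r)) ^ (1 / (1 - α))` gives the estimate.
-/

open MeasureTheory
open scoped ENNReal

/-- Riemann–Liouville fractional integral of order `α` at `t₀`. -/
noncomputable def RL (α t₀ : ℝ) (f : ℝ → ℝ) (t : ℝ) : ℝ :=
  (1 / Real.Gamma α) * ∫ s in t₀..t, (t - s) ^ (α - 1) * f s

open Set

namespace MeasureTheory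

variable {G : Type*} {mG : MeasurableSpace G} [AddGroup G] {μ : Measure G} {f k k' : G → ℝ≥0∞}

theorem lconvolution_le_lintegral_mul (hf : AEMeasurable f μ) {c : ℝ≥0∞} (hk : ∀ z, k z ≤ c)
    (x : G) : (f ⋆ₗ[μ] k) x ≤ (∫⁻ y, f y ∂μ) * c := by
  rw [lconvolution_def, ← lintegral_mul_const'' _ hf]
  exact lintegral_mono fun y => by gcongr; exact hk _

variable [MeasurableAdd₂ G] [MeasurableNeg G]

theorem lintegral_lconvolution [μ.IsAddLeftInvariant] [SFinite μ] (hf : AEMeasurable f μ)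
    (hk : AEMeasurable k μ) : ∫⁻ x, (f ⋆ₗ[μ] k) x ∂μ = (∫⁻ y, f y ∂μ) * ∫⁻ z, k z ∂μ := by
  simp only [lconvolution_def]
  rw [lintegral_lintegral_swap (by fun_prop), ← lintegral_mul_const'' _ hf]
  refine lintegral_congr fun y => ?_
  have hk_shift : AEMeasurable (fun x => k (-y + x)) μ :=
    hk.comp_quasiMeasurePreserving (measurePreserving_add_left μ (-y)).quasiMeasurePreserving
  rw [lintegral_const_mul'' _ hk_shift, lintegral_add_left_eq_self k (-y)]

theorem lconvolution_add (hf : AEMeasurable f μ) (hk : Measurable k) :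
    f ⋆ₗ[μ] (k + k') = f ⋆ₗ[μ] k + f ⋆ₗ[μ] k' := by
  ext x
  simp only [lconvolution_def, Pi.add_apply, mul_add]
  exact lintegral_add_left' (hf.mul (by fun_prop)) _

end MeasureTheory

noncomputable def rlKernel (α : ℝ) : ℝ → ℝ≥0∞ :=
  (Ici 0).indicator fun u => ENNReal.ofReal (u ^ (α - 1))

variable {α δ : ℝ}

theorem measurable_rlKernel : Measurable (rlKernel α) :=
  Measurable.indicator (by fun_prop) measurableSet_Ici

theorem lintegral_indicator_Iic_rlKernel (hα : 0 < α) (hδ : 0 ≤ δ) :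
    ∫⁻ u, (Iic δ).indicator (rlKernel α) u = ENNReal.ofReal (δ ^ α / α) := by
  have hint : IntegrableOn (fun u : ℝ => u ^ (α - 1)) (Ioc 0 δ) :=
    (intervalIntegrable_iff_integrableOn_Ioc_of_le hδ).mp
      (intervalIntegral.intervalIntegrable_rpow' (by linarith))
  rw [lintegral_indicator measurableSet_Iic, rlKernel, setLIntegral_indicator measurableSet_Ici,
    Ici_inter_Iic, ← Measure.restrict_congr_set Ioc_ae_eq_Icc,
    ← ofReal_integral_eq_lintegral_ofReal hint, ← intervalIntegral.integral_of_le hδ,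
    integral_rpow (Or.inl (by linarith)), sub_add_cancel, Real.zero_rpow hα.ne', sub_zero]
  · filter_upwards [ae_restrict_mem measurableSet_Ioc] with u hu
    exact Real.rpow_nonneg hu.1.le _

theorem indicator_Ioi_rlKernel_le (hα1 : α ≤ 1) (hδ : 0 < δ) (u : ℝ) :
    (Ioi δ).indicator (rlKernel α) u ≤ ENNReal.ofReal (δ ^ (α - 1)) := by
  by_cases hu : u ∈ Ioi δ
  · have hu0 : u ∈ Ici (0 : ℝ) := (hδ.trans hu).le
    rw [indicator_of_mem hu, rlKernel, indicator_of_mem hu0]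
    exact ENNReal.ofReal_le_ofReal
      (Real.rpow_le_rpow_of_nonpos hδ hu.le (by linarith))
  · simp [indicator_of_notMem hu]

theorem mul_volume_lt_lconvolution_rlKernel_le (hα : 0 < α) (hα1 : α ≤ 1) (hδ : 0 < δ)
    {g : ℝ → ℝ≥0∞} (hg : AEMeasurable g) {c : ℝ≥0∞}
    (hc : (∫⁻ s, g s) * ENNReal.ofReal (δ ^ (α - 1)) ≤ c) :
    c * volume {t | 2 * c < (g ⋆ₗ rlKernel α) t} ≤
      (∫⁻ s, g s) * ENNReal.ofReal (δ ^ α / α) := by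
  have hsplit : g ⋆ₗ rlKernel α =
      g ⋆ₗ (Iic δ).indicator (rlKernel α) + g ⋆ₗ (Ioi δ).indicator (rlKernel α) := by
    rw [← lconvolution_add hg (measurable_rlKernel.indicator measurableSet_Iic), ← compl_Iic,
      indicator_self_add_compl]
  have hfar : ∀ t, (g ⋆ₗ (Ioi δ).indicator (rlKernel α)) t ≤ c := fun t =>
    (lconvolution_le_lintegral_mul hg (indicator_Ioi_rlKernel_le hα1 hδ) t).trans hc
  have hnear : {t | 2 * c < (g ⋆ₗ rlKernel α) t} ⊆
      {t | c ≤ (g ⋆ₗ (Iic δ).indicator (rlKernel α)) t} := by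
    intro t ht
    by_contra hlt
    have hle : (g ⋆ₗ rlKernel α) t ≤ 2 * c := by
      rw [hsplit, Pi.add_apply, two_mul]
      exact add_le_add (not_le.mp hlt).le (hfar t)
    exact not_le.mpr ht hle
  calc c * volume {t | 2 * c < (g ⋆ₗ rlKernel α) t}
      ≤ c * volume {t | c ≤ (g ⋆ₗ (Iic δ).indicator (rlKernel α)) t} := by gcongr
    _ ≤ ∫⁻ t, (g ⋆ₗ (Iic δ).indicator (rlKernel α)) t :=
      mul_meas_ge_le_lintegral₀ (aemeasurable_lconvolution hg
        (measurable_rlKernel.indicator measurableSet_Iic).aemeasurable) c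
    _ = (∫⁻ s, g s) * ENNReal.ofReal (δ ^ α / α) := by
      rw [lintegral_lconvolution hg (measurable_rlKernel.indicator measurableSet_Iic).aemeasurable,
        lintegral_indicator_Iic_rlKernel hα hδ.le]

theorem enorm_intervalIntegral_le_lconvolution_rlKernel {t₀ t : ℝ} (ht : t₀ ≤ t) {I : Set ℝ}
    (hI : Ioc t₀ t ⊆ I) (f : ℝ → ℝ) :
    ‖∫ s in t₀..t, (t - s) ^ (α - 1) * f s‖ₑ ≤ (I.indicator (‖f ·‖ₑ) ⋆ₗ rlKernel α) t := by
  rw [intervalIntegral.integral_of_le ht, lconvolution_def]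
  refine (enorm_integral_le_lintegral_enorm _).trans ?_
  rw [← lintegral_indicator measurableSet_Ioc]
  refine lintegral_mono fun s => ?_
  by_cases hs : s ∈ Ioc t₀ t
  · have hts : 0 ≤ t - s := sub_nonneg.mpr hs.2
    rw [indicator_of_mem hs, indicator_of_mem (hI hs), rlKernel,
      indicator_of_mem (show -s + t ∈ Ici 0 by simpa [neg_add_eq_sub] using hts), enorm_mul,
      Real.enorm_eq_ofReal (Real.rpow_nonneg hts _), neg_add_eq_sub, mul_comm]
  · simp [indicator_of_notMem hs]

theorem volume_lt_abs_RL_le {t₀ r : ℝ} {I : Set ℝ} {f : ℝ → ℝ} (hα : 0 < α) (hα1 : α ≤ 1)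
    (hδ : 0 < δ) (hIm : MeasurableSet I) (hI : ∀ t ∈ I, t₀ ≤ t ∧ Ioc t₀ t ⊆ I)
    (hf : IntegrableOn f I) (hr : 0 < r)
    (hδN : δ ^ (α - 1) * ∫ t in I, |f t| ≤ Real.Gamma α * r / 2) :
    volume {t ∈ I | r < |RL α t₀ f t|} ≤ ENNReal.ofReal (δ / α) := by
  set N := ∫ t in I, |f t|
  set g : ℝ → ℝ≥0∞ := I.indicator (‖f ·‖ₑ)
  set c := ENNReal.ofReal (Real.Gamma α * r / 2)
  have hΓ := Real.Gamma_pos_of_pos hα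
  have hN : 0 ≤ N := integral_nonneg fun t => abs_nonneg (f t)
  have hg : AEMeasurable g := (aemeasurable_indicator_iff hIm).mpr hf.1.enorm
  have hgN : ∫⁻ s, g s = ENNReal.ofReal N := by
    rw [lintegral_indicator hIm, ← ofReal_integral_norm_eq_lintegral_enorm hf]
    rfl
  have hc : (∫⁻ s, g s) * ENNReal.ofReal (δ ^ (α - 1)) ≤ c := by
    rw [hgN, ← ENNReal.ofReal_mul hN, mul_comm]
    exact ENNReal.ofReal_le_ofReal hδN
  have hS : {t ∈ I | r < |RL α t₀ f t|} ⊆ {t | 2 * c < (g ⋆ₗ rlKernel α) t} := by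
    rintro t ⟨htI, hrt⟩
    obtain ⟨ht₀, hIoc⟩ := hI t htI
    have hlt : Real.Gamma α * r < |∫ s in t₀..t, (t - s) ^ (α - 1) * f s| := by
      rw [RL, abs_mul, abs_of_pos (by positivity), one_div, inv_mul_eq_div, lt_div_iff₀ hΓ]
        at hrt
      linarith
    calc 2 * c = ENNReal.ofReal (Real.Gamma α * r) := by
          rw [← ENNReal.ofReal_ofNat 2, ← ENNReal.ofReal_mul zero_le_two]
          ring_nf
      _ < ‖∫ s in t₀..t, (t - s) ^ (α - 1) * f s‖ₑ := by
          rw [Real.enorm_eq_ofReal_abs]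
          exact (ENNReal.ofReal_lt_ofReal_iff (hlt.trans_le' (by positivity))).mpr hlt
      _ ≤ _ := enorm_intervalIntegral_le_lconvolution_rlKernel ht₀ hIoc f
  have hc0 : c ≠ 0 := by positivity
  refine (ENNReal.mul_le_mul_iff_right hc0 ENNReal.ofReal_ne_top).mp ?_
  calc c * volume {t ∈ I | r < |RL α t₀ f t|}
      ≤ c * volume {t | 2 * c < (g ⋆ₗ rlKernel α) t} := by gcongr
    _ ≤ ENNReal.ofReal N * ENNReal.ofReal (δ ^ α / α) :=
      hgN ▸ mul_volume_lt_lconvolution_rlKernel_le hα hα1 hδ hg hc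
    _ ≤ c * ENNReal.ofReal (δ / α) := by
      rw [← ENNReal.ofReal_mul hN, ← ENNReal.ofReal_mul (by positivity)]
      refine ENNReal.ofReal_le_ofReal ?_
      rw [show N * (δ ^ α / α) = δ ^ (α - 1) * N * (δ / α) by
        rw [Real.rpow_sub_one hδ.ne']; field_simp]
      gcongr

theorem volume_lt_abs_RL_eq_zero {t₀ r : ℝ} {I : Set ℝ} {f : ℝ → ℝ} (hα : 0 < α) (hα1 : α ≤ 1)
    (hIm : MeasurableSet I) (hI : ∀ t ∈ I, t₀ ≤ t ∧ Ioc t₀ t ⊆ I) (hf : IntegrableOn f I)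
    (hr : 0 < r) (hN : ∫ t in I, |f t| = 0) : volume {t ∈ I | r < |RL α t₀ f t|} = 0 := by
  refine le_antisymm (ENNReal.le_of_forall_pos_le_add fun ε hε _ => ?_) bot_le
  have hδN : (α * ε) ^ (α - 1) * ∫ t in I, |f t| ≤ Real.Gamma α * r / 2 := by
    have hΓ := Real.Gamma_pos_of_pos hα
    rw [hN, mul_zero]
    positivity
  have := volume_lt_abs_RL_le hα hα1 (by positivity) hIm hI hf hr hδN
  rwa [mul_div_cancel_left₀ _ hα.ne', ENNReal.ofReal_coe_nnreal, ← zero_add (ε : ℝ≥0∞)] at this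

theorem rpow_one_div_one_sub_rpow_sub_one {x : ℝ} (hα1 : α < 1) (hx : 0 ≤ x) :
    (x ^ (1 / (1 - α))) ^ (α - 1) = x⁻¹ := by
  have h1α : 1 - α ≠ 0 := sub_ne_zero.mpr hα1.ne'
  rw [← Real.rpow_mul hx, show 1 / (1 - α) * (α - 1) = -1 by field_simp; ring, Real.rpow_neg_one]

theorem stmt5_general (α t₀ t₁ : ℝ) (hα : 0 < α) (hα1 : α < 1)
    (I : Set ℝ) (hI : I = Set.Ioc t₀ t₁ ∨ I = Set.Ici t₀)
    (f : ℝ → ℝ) (hf : IntegrableOn f I) (r : ℝ) (hr : 0 < r) :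
    ENNReal.ofReal (r ^ (1 / (1 - α))) * volume {t ∈ I | r < |RL α t₀ f t|} ≤
      ENNReal.ofReal
        (((2 / (α ^ (1 - α) * Real.Gamma α)) * ∫ t in I, |f t|) ^ (1 / (1 - α))) := by
  obtain ⟨hIm, hIoc⟩ : MeasurableSet I ∧ ∀ t ∈ I, t₀ ≤ t ∧ Ioc t₀ t ⊆ I := by
    rcases hI with rfl | rfl
    exacts [⟨measurableSet_Ioc, fun t ht => ⟨ht.1.le, Ioc_subset_Ioc_right ht.2⟩⟩,
      ⟨measurableSet_Ici, fun t ht => ⟨ht, fun s hs => hs.1.le⟩⟩]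
  have hΓ := Real.Gamma_pos_of_pos hα
  set N := ∫ t in I, |f t|
  obtain hN | hN := (show 0 ≤ N from integral_nonneg fun t => abs_nonneg (f t)).eq_or_lt
  · rw [volume_lt_abs_RL_eq_zero hα hα1.le hIm hIoc hf hr hN.symm, mul_zero]
    exact zero_le
  set p := 1 / (1 - α)
  set δ := (2 * N / (Real.Gamma α * r)) ^ p
  have hδN : δ ^ (α - 1) * N = Real.Gamma α * r / 2 := by
    rw [rpow_one_div_one_sub_rpow_sub_one hα1 (by positivity), inv_div]
    field_simp
  have hconst : r ^ p * (δ / α) = ((2 / (α ^ (1 - α) * Real.Gamma α)) * N) ^ p := by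
    rw [show 2 / (α ^ (1 - α) * Real.Gamma α) * N = 2 * N / (Real.Gamma α * r) * r / α ^ (1 - α)
        by field_simp,
      Real.div_rpow (by positivity) (by positivity), Real.mul_rpow (by positivity) hr.le,
      ← Real.rpow_mul hα.le, mul_one_div_cancel (sub_ne_zero.mpr hα1.ne'), Real.rpow_one]
    ring
  calc _ ≤ ENNReal.ofReal (r ^ p) * ENNReal.ofReal (δ / α) := by
        gcongr
        exact volume_lt_abs_RL_le hα hα1.le (by positivity) hIm hIoc hf hr hδN.le
    _ = _ := by rw [← ENNReal.ofReal_mul (by positivity), hconst]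

theorem stmt5 (α t₀ t₁ : ℝ) (hα : 0 < α) (hα1 : α < 1) (ht : t₀ < t₁)
    (I : Set ℝ) (hI : I = Set.Ioc t₀ t₁ ∨ I = Set.Ici t₀)
    (f : ℝ → ℝ) (hf : IntegrableOn f I) (r : ℝ) (hr : 0 < r) :
    ENNReal.ofReal (r ^ (1 / (1 - α))) * volume {t ∈ I | r < |RL α t₀ f t|} ≤
      ENNReal.ofReal
        (((2 / (α ^ (1 - α) * Real.Gamma α)) * ∫ t in I, |f t|) ^ (1 / (1 - α))) :=
  stmt5_general α t₀ t₁ hα hα1 I hI f hf r hr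
end

section
/- Let p ∈ (1,∞), α ∈ (0,1/p), and I = [t₀,t₁] or [t₀,∞). For every f ∈ L^p(I;ℝ), the Riemann–Liouville fractional integral J^α f satisfies sup_{r>0} r^{p/(1-pα)} μ{t ∈ I : |J^α f(t)| > r} ≤ ( K_{α,p} ‖f‖_{L^p(I)} )^{p/(1-pα)}, where K_{α,p} = 2(p-1)^{α(p-1)} / (α^{1-pα} Γ(α) (1-αp)^{α(p-1)}). -/
open MeasureTheory
open scoped ENNReal

lemma young_aux {p p' : ℝ} (hpq : Real.HolderConjugate p p')
    (k g : ℝ → ℝ≥0∞) (hk : Measurable k) (hg : Measurable g) :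
    ∫⁻ t, (∫⁻ s, k (t - s) * g s) ^ p ≤
      (∫⁻ u, k u) ^ (p - 1) * ((∫⁻ u, k u) * ∫⁻ s, g s ^ p) := by
  have hp0 : 0 < p := hpq.pos
  have hp'0 : 0 < p' := hpq.symm.pos
  have hmeas2 : Measurable fun z : ℝ × ℝ => k (z.1 - z.2) * g z.2 ^ p :=
    (hk.comp (measurable_fst.sub measurable_snd)).mul ((hg.comp measurable_snd).pow_const p)
  have hWmeas : Measurable fun t => ∫⁻ s, k (t - s) * g s ^ p :=
    Measurable.lintegral_prod_right' hmeas2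
  have key : ∀ t : ℝ, (∫⁻ s, k (t - s) * g s) ^ p ≤
      (∫⁻ u, k u) ^ (p - 1) * ∫⁻ s, k (t - s) * g s ^ p := by
    intro t
    have hkm : Measurable fun s => k (t - s) := hk.comp (measurable_const.sub measurable_id)
    have h1 : ∫⁻ s, k (t - s) * g s
        ≤ (∫⁻ s, k (t - s)) ^ (1 / p') * (∫⁻ s, k (t - s) * g s ^ p) ^ (1 / p) := by
      have H := ENNReal.lintegral_mul_le_Lp_mul_Lq volume hpq.symm
        (f := fun s => k (t - s) ^ (1 / p')) (g := fun s => k (t - s) ^ (1 / p) * g s)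
        ((hkm.pow_const _).aemeasurable)
        (((hkm.pow_const _).mul hg).aemeasurable)
      have e1 : ∀ s, (fun s => k (t - s) ^ (1 / p')) s * (fun s => k (t - s) ^ (1 / p) * g s) s
          = k (t - s) * g s := by
        intro s
        simp only [← mul_assoc]
        rw [← ENNReal.rpow_add_of_nonneg _ _ (by positivity) (by positivity)]
        rw [div_add_div _ _ (ne_of_gt hp'0) (ne_of_gt hp0)]
        have : (1 * p + p' * 1) / (p' * p) = 1 := by
          have h := hpq.inv_add_inv_eq_one
          field_simp
          linarith [hpq.mul_eq_add]
        rw [this, ENNReal.rpow_one]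
      have e2 : ∀ s, (k (t - s) ^ (1 / p')) ^ p' = k (t - s) := by
        intro s
        rw [← ENNReal.rpow_mul, one_div, inv_mul_cancel₀ (ne_of_gt hp'0), ENNReal.rpow_one]
      have e3 : ∀ s, (k (t - s) ^ (1 / p) * g s) ^ p = k (t - s) * g s ^ p := by
        intro s
        rw [ENNReal.mul_rpow_of_nonneg _ _ hp0.le, ← ENNReal.rpow_mul, one_div,
          inv_mul_cancel₀ (ne_of_gt hp0), ENNReal.rpow_one]
      simp only [Pi.mul_apply] at H
      simp only [e1, e2, e3] at H
      exact H
    calc (∫⁻ s, k (t - s) * g s) ^ p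
        ≤ ((∫⁻ s, k (t - s)) ^ (1 / p') * (∫⁻ s, k (t - s) * g s ^ p) ^ (1 / p)) ^ p :=
          ENNReal.rpow_le_rpow h1 hp0.le
      _ = (∫⁻ u, k u) ^ (p - 1) * ∫⁻ s, k (t - s) * g s ^ p := by
          rw [ENNReal.mul_rpow_of_nonneg _ _ hp0.le, ← ENNReal.rpow_mul, ← ENNReal.rpow_mul,
            (MeasureTheory.Measure.measurePreserving_sub_left volume t).lintegral_comp hk]
          congr 1
          · congr 1
            have h := hpq.inv_add_inv_eq_one
            field_simp
            linarith [hpq.mul_eq_add]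
          · rw [one_div, inv_mul_cancel₀ (ne_of_gt hp0), ENNReal.rpow_one]
  calc ∫⁻ t, (∫⁻ s, k (t - s) * g s) ^ p
      ≤ ∫⁻ t, (∫⁻ u, k u) ^ (p - 1) * ∫⁻ s, k (t - s) * g s ^ p := lintegral_mono key
    _ = (∫⁻ u, k u) ^ (p - 1) * ∫⁻ t, ∫⁻ s, k (t - s) * g s ^ p :=
        lintegral_const_mul _ hWmeas
    _ = (∫⁻ u, k u) ^ (p - 1) * ((∫⁻ u, k u) * ∫⁻ s, g s ^ p) := by
        congr 1
        rw [lintegral_lintegral_swap hmeas2.aemeasurable]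
        calc ∫⁻ s, ∫⁻ t, k (t - s) * g s ^ p
            = ∫⁻ s, (∫⁻ t, k (t - s)) * g s ^ p := by
              refine lintegral_congr fun s => ?_
              exact lintegral_mul_const _ (hk.comp (measurable_id.sub measurable_const))
          _ = ∫⁻ s, (∫⁻ u, k u) * g s ^ p := by
              refine lintegral_congr fun s => ?_
              rw [lintegral_sub_right_eq_self k s]
          _ = (∫⁻ u, k u) * ∫⁻ s, g s ^ p := lintegral_const_mul _ (hg.pow_const p)

lemma knear (γ δ : ℝ) (hγ : -1 < γ) (hδ : 0 < δ) :
    ∫⁻ u in Set.Ioc 0 δ, ENNReal.ofReal (u ^ γ) = ENNReal.ofReal (δ ^ (γ+1) / (γ+1)) := by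
  have hint : IntegrableOn (fun u : ℝ => u ^ γ) (Set.Ioc 0 δ) volume := by
    have := intervalIntegral.intervalIntegrable_rpow' (a := 0) (b := δ) hγ
    rwa [intervalIntegrable_iff_integrableOn_Ioc_of_le hδ.le] at this
  rw [← ofReal_integral_eq_lintegral_ofReal hint]
  · congr 1
    rw [← intervalIntegral.integral_of_le hδ.le]
    rw [integral_rpow (Or.inl hγ)]
    rw [Real.zero_rpow (by linarith : γ + 1 ≠ 0), sub_zero]
  · filter_upwards [ae_restrict_mem measurableSet_Ioc] with u hu
    exact Real.rpow_nonneg hu.1.le _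

lemma kfar (γ δ : ℝ) (hγ : γ < -1) (hδ : 0 < δ) :
    ∫⁻ u in Set.Ioi δ, ENNReal.ofReal (u ^ γ) = ENNReal.ofReal (-δ ^ (γ+1) / (γ+1)) := by
  rw [← ofReal_integral_eq_lintegral_ofReal (integrableOn_Ioi_rpow_of_lt hγ hδ)]
  · rw [integral_Ioi_rpow_of_lt hγ hδ]
  · filter_upwards [ae_restrict_mem measurableSet_Ioi] with u hu
    exact Real.rpow_nonneg (le_trans hδ.le (le_of_lt hu)) _

lemma const_id (p α r Γ A : ℝ) (hp : 1 < p) (hα : 0 < α) (hpα : 0 < 1 - p*α)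
    (hr : 0 < r) (hΓ : 0 < Γ) (hA : 0 < A) (δ : ℝ)
    (hδdef0 : δ = (r*Γ/(2*((p-1)/(1-α*p))^(1/(p/(p-1)))*A^(1/p)))^(1/(α-1/p))) :
    r ^ (p/(1-p*α)) * ((δ^α/α) ^ p * A / (r*Γ/2) ^ p) =
    ((2*(p-1)^(α*(p-1))/(α^(1-p*α)*Γ*(1-α*p)^(α*(p-1)))) * (A^(1/p))) ^ (p/(1-p*α)) := by
  subst hδdef0
  have hp0 : (0:ℝ) < p := by linarith
  have hp1 : (0:ℝ) < p - 1 := by linarith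
  have h1αp : (0:ℝ) < 1 - α*p := by nlinarith
  set p' : ℝ := p/(p-1) with hp'def
  set q : ℝ := p/(1-p*α) with hqdef
  set Cf : ℝ := ((p-1)/(1-α*p))^(1/p') with hCfdef
  set An : ℝ := A^(1/p) with hAndef
  set δ : ℝ := (r*Γ/(2*Cf*An))^(1/(α-1/p)) with hδdef
  set Kc : ℝ := 2*(p-1)^(α*(p-1))/(α^(1-p*α)*Γ*(1-α*p)^(α*(p-1))) with hKcdef
  have hCf : 0 < Cf := Real.rpow_pos_of_pos (div_pos hp1 h1αp) _
  have hAn : 0 < An := Real.rpow_pos_of_pos hA _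
  have hXb : 0 < r*Γ/(2*Cf*An) := by positivity
  have hδ : 0 < δ := Real.rpow_pos_of_pos hXb _
  have hu : α - 1/p < 0 := by
    rw [sub_neg]
    rw [lt_div_iff₀ hp0]
    nlinarith
  have hKc : 0 < Kc := by
    have h1 : 0 < (p-1)^(α*(p-1)) := Real.rpow_pos_of_pos hp1 _
    have h2 : 0 < α^(1-p*α) := Real.rpow_pos_of_pos hα _
    have h3 : 0 < (1-α*p)^(α*(p-1)) := Real.rpow_pos_of_pos h1αp _
    positivity
  have hM : 0 < δ^α/α := by positivity
  have hX : 0 < r ^ q * ((δ^α/α) ^ p * A / (r*Γ/2) ^ p) := by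
    have := Real.rpow_pos_of_pos hr q
    have h4 : 0 < (δ^α/α)^p := Real.rpow_pos_of_pos hM _
    have h5 : 0 < (r*Γ/2)^p := Real.rpow_pos_of_pos (by positivity) _
    positivity
  have hY : 0 < (Kc * An) ^ q := Real.rpow_pos_of_pos (by positivity) _
  have Lδ : Real.log δ = (1/(α-1/p)) * (Real.log r + Real.log Γ -
      (Real.log 2 + ((1/p')*(Real.log (p-1) - Real.log (1-α*p)) + (1/p)*Real.log A))) := by
    rw [hδdef, Real.log_rpow hXb, Real.log_div (by positivity) (by positivity),
      Real.log_mul hr.ne' hΓ.ne', Real.log_mul (by positivity) hAn.ne',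
      Real.log_mul two_ne_zero hCf.ne', hCfdef,
      Real.log_rpow (div_pos hp1 h1αp), Real.log_div hp1.ne' h1αp.ne',
      hAndef, Real.log_rpow hA]
    ring
  have LX : Real.log (r ^ q * ((δ^α/α) ^ p * A / (r*Γ/2) ^ p)) =
      q*Real.log r + p*(α*Real.log δ - Real.log α) + Real.log A
        - p*(Real.log r + Real.log Γ - Real.log 2) := by
    rw [Real.log_mul (Real.rpow_pos_of_pos hr q).ne' (by positivity),
      Real.log_rpow hr,
      Real.log_div (by positivity) (Real.rpow_pos_of_pos (by positivity) p).ne',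
      Real.log_mul (Real.rpow_pos_of_pos hM p).ne' hA.ne',
      Real.log_rpow hM, Real.log_div (Real.rpow_pos_of_pos hδ α).ne' hα.ne',
      Real.log_rpow hδ, Real.log_rpow (by positivity : (0:ℝ) < r*Γ/2),
      Real.log_div (by positivity : r*Γ ≠ 0) two_ne_zero,
      Real.log_mul hr.ne' hΓ.ne']
    ring
  have LY : Real.log ((Kc * An) ^ q) = q * ((Real.log 2 + α*(p-1)*Real.log (p-1)
      - ((1-p*α)*Real.log α + Real.log Γ + α*(p-1)*Real.log (1-α*p))) + (1/p)*Real.log A) := by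
    rw [Real.log_rpow (by positivity), Real.log_mul hKc.ne' hAn.ne', hKcdef,
      Real.log_div (by positivity) (by positivity),
      Real.log_mul (by positivity : (2:ℝ) ≠ 0) (Real.rpow_pos_of_pos hp1 _).ne',
      Real.log_mul (by positivity : α^(1-p*α)*Γ ≠ 0) (Real.rpow_pos_of_pos h1αp _).ne',
      Real.log_mul (Real.rpow_pos_of_pos hα _).ne' hΓ.ne',
      Real.log_rpow hp1, Real.log_rpow hα, Real.log_rpow h1αp,
      hAndef, Real.log_rpow hA]
  refine Real.log_injOn_pos (Set.mem_Ioi.2 hX) (Set.mem_Ioi.2 hY) ?_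
  have hune : α - 1/p ≠ 0 := ne_of_lt hu
  have hw : p*α - 1 ≠ 0 := by
    have : p*α < 1 := by linarith
    linarith
  have hpα' : (1 : ℝ) - p*α ≠ 0 := hpα.ne'
  have hrw : (1:ℝ)/(α-1/p) = p/(p*α-1) := by
    rw [div_eq_div_iff hune hw]
    field_simp
  rw [LX, LY, Lδ, hrw]
  simp only [hqdef, hp'def]
  field_simp
  ring

lemma key (p α t₀ : ℝ) (hp : 1 < p) (hα : 0 < α) (hαp : α < 1 / p)
    (I : Set ℝ) (hImeas : MeasurableSet I) (hlb : ∀ t ∈ I, t₀ ≤ t)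
    (hsub : ∀ t ∈ I, Set.Ioc t₀ t ⊆ I)
    (f : ℝ → ℝ) (hfm : Measurable f)
    (hfi : Integrable (fun t => |f t| ^ p) (volume.restrict I))
    (r : ℝ) (hr : 0 < r) :
    ENNReal.ofReal (r ^ (p / (1 - p * α))) * volume {t ∈ I | r < |RL α t₀ f t|} ≤
      ENNReal.ofReal
        (((2 * (p - 1) ^ (α * (p - 1)) /
            (α ^ (1 - p * α) * Real.Gamma α * (1 - α * p) ^ (α * (p - 1)))) *
          (∫ t in I, |f t| ^ p) ^ (1 / p)) ^ (p / (1 - p * α))) := by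
  have hp0 : (0:ℝ) < p := by linarith
  have hp1 : (0:ℝ) < p - 1 := by linarith
  have hΓ : 0 < Real.Gamma α := Real.Gamma_pos_of_pos hα
  have hα1 : α - 1 < 0 := by
    have h1p : 1 / p < 1 := by rw [div_lt_one hp0]; linarith
    linarith
  have hpα : (0:ℝ) < 1 - p * α := by
    have := (lt_div_iff₀ hp0).mp hαp
    nlinarith
  set Γv := Real.Gamma α with hΓvdef
  set A := ∫ t in I, |f t| ^ p with hAdef
  have hA0 : 0 ≤ A := setIntegral_nonneg hImeas fun t _ => Real.rpow_nonneg (abs_nonneg _) _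
  rcases eq_or_lt_of_le hA0 with hA | hA
  · -- degenerate case : A = 0
    have hae : (fun t => |f t| ^ p) =ᵐ[volume.restrict I] 0 :=
      (integral_eq_zero_iff_of_nonneg_ae
        (Filter.Eventually.of_forall fun t => Real.rpow_nonneg (abs_nonneg _) _)
        hfi).mp hA.symm
    have hfae : f =ᵐ[volume.restrict I] 0 := by
      filter_upwards [hae] with t ht
      have := (Real.rpow_eq_zero_iff_of_nonneg (abs_nonneg (f t))).mp ht
      simpa [abs_eq_zero] using this.1
    have hE : {t ∈ I | r < |RL α t₀ f t|} = ∅ := by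
      ext t
      simp only [Set.mem_setOf_eq, Set.mem_empty_iff_false, iff_false, not_and, not_lt]
      intro htI
      have h0 : RL α t₀ f t = 0 := by
        have hz : ∫ s in t₀..t, (t - s) ^ (α - 1) * f s = 0 := by
          rw [intervalIntegral.integral_of_le (hlb t htI)]
          apply integral_eq_zero_of_ae
          have hf0 : f =ᵐ[volume.restrict (Set.Ioc t₀ t)] 0 :=
            ae_restrict_of_ae_restrict_of_subset (hsub t htI) hfae
          filter_upwards [hf0] with s hs
          simp [hs]
        unfold RL
        rw [hz, mul_zero]
      rw [h0, abs_zero]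
      exact hr.le
    rw [hE]
    simp only [measure_empty, mul_zero]
    exact zero_le
  -- main case
  set p' : ℝ := p/(p-1) with hp'def
  have hconj : p.HolderConjugate p' := (Real.holderConjugate_iff_eq_conjExponent hp).2 (by rw [hp'def])
  have hp'0 : 0 < p' := hconj.symm.pos
  set Cf : ℝ := ((p-1)/(1-α*p))^(1/p') with hCfdef
  set An : ℝ := A^(1/p) with hAndef
  have h1αp : (0:ℝ) < 1 - α*p := by nlinarith
  have hCf : 0 < Cf := Real.rpow_pos_of_pos (div_pos hp1 h1αp) _
  have hAn : 0 < An := Real.rpow_pos_of_pos hA _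
  have hXb : 0 < r*Γv/(2*Cf*An) := by positivity
  set δ : ℝ := (r*Γv/(2*Cf*An))^(1/(α-1/p)) with hδdef
  have hδ : 0 < δ := Real.rpow_pos_of_pos hXb _
  have hune : α - 1/p ≠ 0 := by
    have : α - 1/p < 0 := by linarith
    exact ne_of_lt this
  have hM : 0 < δ^α/α := by positivity
  -- the function G
  set G : ℝ → ℝ≥0∞ := fun s => Set.indicator I (fun s => (‖f s‖₊ : ℝ≥0∞)) s with hGdef
  have hGm : Measurable G := hfm.enorm.indicator hImeas
  have hGp : ∫⁻ s, G s ^ p = ENNReal.ofReal A := by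
    have e : ∀ s, G s ^ p = Set.indicator I (fun s => ENNReal.ofReal (|f s| ^ p)) s := by
      intro s
      by_cases h : s ∈ I
      · simp only [hGdef, Set.indicator_of_mem h]
        rw [← ENNReal.ofReal_coe_nnreal, coe_nnnorm, Real.norm_eq_abs,
          ENNReal.ofReal_rpow_of_nonneg (abs_nonneg _) hp0.le]
      · simp [hGdef, Set.indicator_of_notMem h, ENNReal.zero_rpow_of_pos hp0]
    rw [lintegral_congr e, lintegral_indicator hImeas,
      ← ofReal_integral_eq_lintegral_ofReal hfi
        (Filter.Eventually.of_forall fun t => Real.rpow_nonneg (abs_nonneg _) _)]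
  -- kernels
  set K1 : ℝ → ℝ≥0∞ := fun u => Set.indicator (Set.Ioc 0 δ) (fun u => ENNReal.ofReal (u ^ (α-1))) u with hK1def
  set K2 : ℝ → ℝ≥0∞ := fun u => Set.indicator (Set.Ioi δ) (fun u => ENNReal.ofReal (u ^ (α-1))) u with hK2def
  have hK1m : Measurable K1 :=
    (ENNReal.measurable_ofReal.comp (measurable_id.pow_const _)).indicator measurableSet_Ioc
  have hK2m : Measurable K2 :=
    (ENNReal.measurable_ofReal.comp (measurable_id.pow_const _)).indicator measurableSet_Ioi
  have hK1int : ∫⁻ u, K1 u = ENNReal.ofReal (δ^α/α) := by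
    rw [hK1def, lintegral_indicator measurableSet_Ioc, knear (α-1) δ (by linarith) hδ]
    norm_num
  have hβ : (α-1)*p' < -1 := by
    have h1 : (α-1)*p' + 1 = (α*p-1)/(p-1) := by rw [hp'def]; field_simp; ring
    have h2 : (α*p-1)/(p-1) < 0 := div_neg_of_neg_of_pos (by nlinarith) hp1
    linarith
  have hK2int : ∫⁻ u, (K2 u) ^ p' =
      ENNReal.ofReal (δ^((α-1)*p'+1) * ((p-1)/(1-α*p))) := by
    have e : ∀ u, (K2 u)^p' =
        Set.indicator (Set.Ioi δ) (fun u => ENNReal.ofReal (u^((α-1)*p'))) u := by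
      intro u
      by_cases h : u ∈ Set.Ioi δ
      · simp only [hK2def, Set.indicator_of_mem h]
        rw [ENNReal.ofReal_rpow_of_nonneg (Real.rpow_nonneg (le_of_lt (lt_trans hδ h)) _) hp'0.le,
          ← Real.rpow_mul (le_of_lt (lt_trans hδ h))]
      · simp [hK2def, Set.indicator_of_notMem h, ENNReal.zero_rpow_of_pos hp'0]
    rw [lintegral_congr e, lintegral_indicator measurableSet_Ioi, kfar _ δ hβ hδ]
    congr 1
    have h1 : (α-1)*p' + 1 = (α*p-1)/(p-1) := by rw [hp'def]; field_simp; ring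
    rw [div_eq_iff (by rw [h1]; exact ne_of_lt (div_neg_of_neg_of_pos (by nlinarith) hp1))]
    rw [h1]
    field_simp
    ring
  set T1 : ℝ → ℝ≥0∞ := fun t => ∫⁻ s, K1 (t - s) * G s with hT1def
  set T2 : ℝ → ℝ≥0∞ := fun t => ∫⁻ s, K2 (t - s) * G s with hT2def
  -- far bound
  have hT2 : ∀ t, T2 t ≤ ENNReal.ofReal (r*Γv/2) := by
    intro t
    have hH := ENNReal.lintegral_mul_le_Lp_mul_Lq volume hconj.symm
      (f := fun s => K2 (t-s)) (g := G)
      ((hK2m.comp (measurable_const.sub measurable_id)).aemeasurable) hGm.aemeasurable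
    simp only [Pi.mul_apply] at hH
    have hch : ∫⁻ s, K2 (t-s) ^ p' = ∫⁻ u, K2 u ^ p' :=
      (MeasureTheory.Measure.measurePreserving_sub_left volume t).lintegral_comp
        (hK2m.pow_const _)
    rw [hch, hK2int, hGp] at hH
    refine le_trans hH (le_of_eq ?_)
    rw [ENNReal.ofReal_rpow_of_nonneg (by positivity) (by positivity : (0:ℝ) ≤ 1/p'),
      ENNReal.ofReal_rpow_of_nonneg hA0 (by positivity : (0:ℝ) ≤ 1/p),
      ← ENNReal.ofReal_mul (by positivity)]
    congr 1
    have hexp : ((α-1)*p'+1)*(1/p') = α - 1/p := by rw [hp'def]; field_simp; ring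
    have hδpow : δ^(α-1/p) = r*Γv/(2*Cf*An) := by
      rw [hδdef, ← Real.rpow_mul hXb.le, one_div, inv_mul_cancel₀ hune, Real.rpow_one]
    calc (δ^((α-1)*p'+1) * ((p-1)/(1-α*p))) ^ (1/p') * A ^ (1/p)
        = (δ^((α-1)*p'+1))^(1/p') * ((p-1)/(1-α*p))^(1/p') * A^(1/p) := by
          rw [Real.mul_rpow (Real.rpow_nonneg hδ.le _) (by positivity)]
      _ = δ^(α-1/p) * Cf * An := by
          rw [← Real.rpow_mul hδ.le, hexp, hCfdef, hAndef]
      _ = r*Γv/2 := by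
          rw [hδpow]
          field_simp
  -- inclusion
  have hsubset : {t ∈ I | r < |RL α t₀ f t|} ⊆ {t | ENNReal.ofReal (r*Γv/2) ≤ T1 t} := by
    rintro t ⟨htI, hrt⟩
    have hIoc : Set.Ioc t₀ t ⊆ I := hsub t htI
    have habs : |RL α t₀ f t| = (1/Γv) * |∫ s in t₀..t, (t - s) ^ (α - 1) * f s| := by
      unfold RL
      rw [abs_mul, abs_of_pos (by positivity : (0:ℝ) < 1/Γv)]
    have h1 : r * Γv < |∫ s in t₀..t, (t - s) ^ (α - 1) * f s| := by
      rw [habs] at hrt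
      have h2 := mul_lt_mul_of_pos_right hrt hΓ
      have h3 : 1/Γv * |∫ s in t₀..t, (t - s) ^ (α - 1) * f s| * Γv
          = |∫ s in t₀..t, (t - s) ^ (α - 1) * f s| := by
        field_simp
      linarith
    have h2 : ENNReal.ofReal (r*Γv) ≤
        ∫⁻ s in Set.Ioc t₀ t, ENNReal.ofReal ((t-s)^(α-1)) * (‖f s‖₊ : ℝ≥0∞) := by
      calc ENNReal.ofReal (r*Γv)
          ≤ ENNReal.ofReal |∫ s in t₀..t, (t - s) ^ (α - 1) * f s| :=
            ENNReal.ofReal_le_ofReal h1.le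
        _ = (‖∫ s in Set.Ioc t₀ t, (t - s) ^ (α - 1) * f s‖₊ : ℝ≥0∞) := by
            rw [← intervalIntegral.integral_of_le (hlb t htI)]; exact (Real.enorm_eq_ofReal_abs _).symm
        _ ≤ ∫⁻ s in Set.Ioc t₀ t, (‖(t - s) ^ (α - 1) * f s‖₊ : ℝ≥0∞) :=
            enorm_integral_le_lintegral_enorm _
        _ = ∫⁻ s in Set.Ioc t₀ t, ENNReal.ofReal ((t-s)^(α-1)) * (‖f s‖₊ : ℝ≥0∞) := by
            refine setLIntegral_congr_fun measurableSet_Ioc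
              (fun s hs => ?_)
            rw [nnnorm_mul, ENNReal.coe_mul, ← ENNReal.ofReal_coe_nnreal, coe_nnnorm,
              Real.norm_of_nonneg (Real.rpow_nonneg (sub_nonneg.mpr hs.2) _)]
    have h3 : (∫⁻ s in Set.Ioc t₀ t, ENNReal.ofReal ((t-s)^(α-1)) * (‖f s‖₊ : ℝ≥0∞))
        ≤ T1 t + T2 t := by
      have hmono : ∫⁻ s in Set.Ioc t₀ t, ENNReal.ofReal ((t-s)^(α-1)) * (‖f s‖₊ : ℝ≥0∞)
          ≤ ∫⁻ s in Set.Ioc t₀ t, (K1 (t-s) + K2 (t-s)) * G s := by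
        refine lintegral_mono_ae ((ae_restrict_iff' measurableSet_Ioc).mpr
          (Filter.Eventually.of_forall fun s hs => ?_))
        have hGs : G s = (‖f s‖₊ : ℝ≥0∞) := Set.indicator_of_mem (hIoc hs) _
        rw [hGs]
        refine mul_le_mul_left ?_ _
        rcases eq_or_lt_of_le hs.2 with hst | hst
        · rw [hst, sub_self, Real.zero_rpow (ne_of_lt hα1), ENNReal.ofReal_zero]
          exact zero_le
        · have hts : 0 < t - s := sub_pos.mpr hst
          by_cases hd : t - s ≤ δ
          · simp only [hK1def]
            rw [Set.indicator_of_mem (Set.mem_Ioc.mpr ⟨hts, hd⟩)]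
            exact le_add_right le_rfl
          · simp only [hK2def]
            rw [Set.indicator_of_mem (Set.mem_Ioi.mpr (lt_of_not_ge hd))]
            exact le_add_left le_rfl
      have hm1 : Measurable fun s : ℝ => K1 (t - s) * G s :=
        (hK1m.comp (measurable_const.sub measurable_id)).mul hGm
      refine le_trans hmono (le_trans (setLIntegral_le_lintegral _ _) (le_of_eq ?_))
      simp_rw [add_mul]
      rw [lintegral_add_left hm1]
    simp only [Set.mem_setOf_eq]
    by_contra hcon
    push_neg at hcon
    have h4 : T1 t + T2 t < ENNReal.ofReal (r*Γv/2) + ENNReal.ofReal (r*Γv/2) :=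
      lt_of_le_of_lt (add_le_add_right (hT2 t) _)
        (ENNReal.add_lt_add_right ENNReal.ofReal_ne_top hcon)
    rw [← ENNReal.ofReal_add (by positivity) (by positivity)] at h4
    have h5 : r*Γv/2 + r*Γv/2 = r*Γv := by ring
    rw [h5] at h4
    exact absurd (lt_of_le_of_lt (le_trans h2 h3) h4) (lt_irrefl _)
  -- Chebyshev
  have hT1m : Measurable T1 :=
    Measurable.lintegral_prod_right'
      ((hK1m.comp (measurable_fst.sub measurable_snd)).mul (hGm.comp measurable_snd))
  have hrΓ2 : (0:ℝ) < r*Γv/2 := by positivity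
  have cheb : ENNReal.ofReal ((r*Γv/2)^p) * volume {t | ENNReal.ofReal (r*Γv/2) ≤ T1 t}
      ≤ ENNReal.ofReal ((δ^α/α)^p * A) := by
    have hsub2 : {t | ENNReal.ofReal (r*Γv/2) ≤ T1 t}
        ⊆ {t | ENNReal.ofReal ((r*Γv/2)^p) ≤ T1 t ^ p} := by
      intro t ht
      simp only [Set.mem_setOf_eq] at ht ⊢
      rw [← ENNReal.ofReal_rpow_of_nonneg hrΓ2.le hp0.le]
      exact ENNReal.rpow_le_rpow ht hp0.le
    calc ENNReal.ofReal ((r*Γv/2)^p) * volume {t | ENNReal.ofReal (r*Γv/2) ≤ T1 t}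
        ≤ ENNReal.ofReal ((r*Γv/2)^p) *
            volume {t | ENNReal.ofReal ((r*Γv/2)^p) ≤ T1 t ^ p} :=
          mul_le_mul_right (measure_mono hsub2) _
      _ ≤ ∫⁻ t, T1 t ^ p := mul_meas_ge_le_lintegral₀ (hT1m.pow_const p).aemeasurable _
      _ ≤ (∫⁻ u, K1 u) ^ (p - 1) * ((∫⁻ u, K1 u) * ∫⁻ s, G s ^ p) :=
          young_aux hconj K1 G hK1m hGm
      _ = ENNReal.ofReal ((δ^α/α)^p * A) := by
          rw [hK1int, hGp,
            ENNReal.ofReal_rpow_of_nonneg hM.le (by linarith : (0:ℝ) ≤ p - 1),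
            ← ENNReal.ofReal_mul (by positivity),
            ← ENNReal.ofReal_mul (by positivity)]
          congr 1
          rw [show p = (p-1)+1 by ring, Real.rpow_add hM, Real.rpow_one]
          ring
  -- assembly
  have hc0 : ENNReal.ofReal ((r*Γv/2)^p) ≠ 0 := by
    rw [Ne, ENNReal.ofReal_eq_zero, not_le]
    positivity
  have hμE : volume {t ∈ I | r < |RL α t₀ f t|}
      ≤ ENNReal.ofReal ((δ^α/α)^p * A) / ENNReal.ofReal ((r*Γv/2)^p) := by
    refine le_trans (measure_mono hsubset) ?_
    rw [ENNReal.le_div_iff_mul_le (Or.inl hc0) (Or.inl ENNReal.ofReal_ne_top)]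
    rw [mul_comm]
    exact cheb
  calc ENNReal.ofReal (r ^ (p / (1 - p * α))) * volume {t ∈ I | r < |RL α t₀ f t|}
      ≤ ENNReal.ofReal (r ^ (p / (1 - p * α))) *
          (ENNReal.ofReal ((δ^α/α)^p * A) / ENNReal.ofReal ((r*Γv/2)^p)) :=
        mul_le_mul_right hμE _
    _ = ENNReal.ofReal (r ^ (p / (1 - p * α)) * ((δ^α/α)^p * A / (r*Γv/2)^p)) := by
        rw [← ENNReal.ofReal_div_of_pos (Real.rpow_pos_of_pos hrΓ2 _),
          ← ENNReal.ofReal_mul (Real.rpow_nonneg hr.le _)]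
    _ = ENNReal.ofReal
        (((2 * (p - 1) ^ (α * (p - 1)) /
            (α ^ (1 - p * α) * Γv * (1 - α * p) ^ (α * (p - 1)))) * An) ^ (p / (1 - p * α))) := by
        congr 1
        exact const_id p α r Γv A hp hα hpα hr hΓ hA δ hδdef

theorem stmt6 (p α t₀ t₁ : ℝ) (hp : 1 < p) (hα : 0 < α) (hαp : α < 1 / p)
    (ht : t₀ < t₁) (I : Set ℝ) (hI : I = Set.Ioc t₀ t₁ ∨ I = Set.Ici t₀)
    (f : ℝ → ℝ) (hf : MemLp f (ENNReal.ofReal p) (volume.restrict I))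
    (r : ℝ) (hr : 0 < r) :
    ENNReal.ofReal (r ^ (p / (1 - p * α))) * volume {t ∈ I | r < |RL α t₀ f t|} ≤
      ENNReal.ofReal
        (((2 * (p - 1) ^ (α * (p - 1)) /
            (α ^ (1 - p * α) * Real.Gamma α * (1 - α * p) ^ (α * (p - 1)))) *
          (∫ t in I, |f t| ^ p) ^ (1 / p)) ^ (p / (1 - p * α))) := by
  have hp0 : (0:ℝ) < p := by linarith
  have hmeas : AEStronglyMeasurable f (volume.restrict I) := hf.1
  set g : ℝ → ℝ := hmeas.mk f with hgdef
  have hgm : Measurable g := hmeas.stronglyMeasurable_mk.measurable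
  have hfg : f =ᵐ[volume.restrict I] g := hmeas.ae_eq_mk
  have hImeas : MeasurableSet I := by
    rcases hI with h | h
    · rw [h]; exact measurableSet_Ioc
    · rw [h]; exact measurableSet_Ici
  have hlb : ∀ t ∈ I, t₀ ≤ t := by
    rcases hI with h | h <;> subst h <;> intro t ht
    · exact ht.1.le
    · exact ht
  have hsub : ∀ t ∈ I, Set.Ioc t₀ t ⊆ I := by
    rcases hI with h | h <;> subst h <;> intro t ht s hs
    · exact ⟨hs.1, le_trans hs.2 ht.2⟩
    · exact hs.1.le
  have hRL : ∀ t ∈ I, RL α t₀ f t = RL α t₀ g t := by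
    intro t htI
    unfold RL
    congr 1
    rw [intervalIntegral.integral_of_le (hlb t htI), intervalIntegral.integral_of_le (hlb t htI)]
    apply integral_congr_ae
    have h := ae_restrict_of_ae_restrict_of_subset (hsub t htI) hfg
    filter_upwards [h] with s hs
    rw [hs]
  have hsetEq : {t ∈ I | r < |RL α t₀ f t|} = {t ∈ I | r < |RL α t₀ g t|} := by
    ext t
    simp only [Set.mem_setOf_eq]
    exact and_congr_right fun h1 => by rw [hRL t h1]
  have hintEq : (∫ t in I, |f t| ^ p) = ∫ t in I, |g t| ^ p := by
    apply integral_congr_ae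
    filter_upwards [hfg] with t htg
    rw [htg]
  have hfi0 : Integrable (fun t => |f t| ^ p) (volume.restrict I) := by
    have h := hf.integrable_norm_rpow (by simp [ENNReal.ofReal_eq_zero]; linarith)
      ENNReal.ofReal_ne_top
    simpa [ENNReal.toReal_ofReal hp0.le, Real.norm_eq_abs] using h
  have hfi : Integrable (fun t => |g t| ^ p) (volume.restrict I) := by
    apply hfi0.congr
    filter_upwards [hfg] with t htg
    rw [htg]
  rw [hsetEq, hintEq]
  exact key p α t₀ hp hα hαp I hImeas hlb hsub g hgm hfi r hr
end

section
/- Let p ∈ (1,∞), α ∈ (0,1/p), t₀ < t₁, and η ∈ (p/(1-pα), ∞]. Choose β with α + 1/η < β < 1/p (interpreting 1/η = 0 if η = ∞), and set f(t) = (t-t₀)^{-β} for t ∈ (t₀,t₁]. Then f ∈ L^p(t₀,t₁;ℝ), the fractional integral equals J^α f(t) = (Γ(1-β)/Γ(1+α-β)) (t-t₀)^{α-β} for t ∈ (t₀,t₁], and J^α f ∉ L^η(t₀,t₁;ℝ). -/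
open MeasureTheory
open scoped ENNReal

/-!
The substitution `s = t₀ + (t - t₀) x` turns the fractional integral of `(s - t₀) ^ (-β)` into a
Beta integral, which gives the closed form `C (t - t₀) ^ (α - β)` with `C > 0`. A power
`(t - t₀) ^ r` lies in `L^q(t₀, t₁)` exactly when `r q > -1`: this gives `f ∈ L^p` from `β p < 1`,
and since `L^η ⊆ L^q` for `q ≤ η`, it suffices to find a finite `q ≤ η` with `(α - β) q ≤ -1`,
namely `q = η` or `q = 1 / (β - α)` when `η = ∞`.
-/

open Set

lemma integral_rpow_mul_one_sub_rpow {u v : ℝ} (hu : 0 < u) (hv : 0 < v) :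
    ∫ x in (0 : ℝ)..1, x ^ (u - 1) * (1 - x) ^ (v - 1)
      = Real.Gamma u * Real.Gamma v / Real.Gamma (u + v) := by
  have hcast : ((∫ x in (0 : ℝ)..1, x ^ (u - 1) * (1 - x) ^ (v - 1) : ℝ) : ℂ)
      = Complex.betaIntegral u v := by
    rw [Complex.betaIntegral, ← intervalIntegral.integral_ofReal]
    refine intervalIntegral.integral_congr fun x hx => ?_
    rw [uIcc_of_le zero_le_one] at hx
    simp only [Complex.ofReal_mul, Complex.ofReal_cpow hx.1,
      Complex.ofReal_cpow (sub_nonneg.2 hx.2)]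
    push_cast
    ring
  rw [Complex.betaIntegral_eq_Gamma_mul_div _ _ (by simpa) (by simpa), ← Complex.ofReal_add,
    Complex.Gamma_ofReal, Complex.Gamma_ofReal, Complex.Gamma_ofReal] at hcast
  exact_mod_cast hcast

lemma integral_sub_rpow_mul_sub_rpow {a b t₀ t : ℝ} (ha : 0 < a) (hb : 0 < b) (ht : t₀ < t) :
    ∫ s in t₀..t, (t - s) ^ (a - 1) * (s - t₀) ^ (b - 1)
      = Real.Gamma a * Real.Gamma b / Real.Gamma (a + b) * (t - t₀) ^ (a + b - 1) := by
  set c := t - t₀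
  have hc : 0 < c := sub_pos.2 ht
  have hsubst := intervalIntegral.integral_comp_mul_add
    (fun s => (t - s) ^ (a - 1) * (s - t₀) ^ (b - 1)) hc.ne' t₀ (a := 0) (b := 1)
  rw [mul_zero, zero_add, mul_one, sub_add_cancel, smul_eq_mul,
    eq_inv_mul_iff_mul_eq₀ hc.ne'] at hsubst
  rw [← hsubst]
  have hscale : EqOn (fun x => (t - (c * x + t₀)) ^ (a - 1) * (c * x + t₀ - t₀) ^ (b - 1))
      (fun x => c ^ (a - 1) * c ^ (b - 1) * (x ^ (b - 1) * (1 - x) ^ (a - 1))) (uIcc 0 1) := by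
    intro x hx
    rw [uIcc_of_le zero_le_one] at hx
    simp only [show t - (c * x + t₀) = c * (1 - x) by ring, add_sub_cancel_right,
      Real.mul_rpow hc.le (sub_nonneg.2 hx.2), Real.mul_rpow hc.le hx.1]
    ring
  rw [intervalIntegral.integral_congr hscale, intervalIntegral.integral_const_mul,
    integral_rpow_mul_one_sub_rpow hb ha, add_comm b a,
    show a + b - 1 = 1 + (a - 1) + (b - 1) by ring, Real.rpow_add hc, Real.rpow_add hc,
    Real.rpow_one]
  ring

lemma RL_sub_rpow_neg {α β t₀ t : ℝ} (hα : 0 < α) (hβ : β < 1) (ht : t₀ < t) :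
    RL α t₀ (fun s => (s - t₀) ^ (-β)) t
      = (Real.Gamma (1 - β) / Real.Gamma (1 + α - β)) * (t - t₀) ^ (α - β) := by
  have h := integral_sub_rpow_mul_sub_rpow hα (sub_pos.2 hβ) ht
  rw [show 1 - β - 1 = -β by ring, show α + (1 - β) = 1 + α - β by ring,
    show 1 + α - β - 1 = α - β by ring] at h
  rw [RL, h]
  have hΓα : Real.Gamma α ≠ 0 := (Real.Gamma_pos_of_pos hα).ne'
  field_simp

lemma integrableOn_sub_rpow_Ioc_iff {r t₀ t₁ : ℝ} (ht : t₀ < t₁) :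
    IntegrableOn (fun x => (x - t₀) ^ r) (Ioc t₀ t₁) ↔ -1 < r := by
  have htranslate := IntervalIntegrable.comp_sub_right_iff (f := fun x : ℝ => x ^ r)
    (a := 0) (b := t₁ - t₀) (c := t₀)
  rw [zero_add, sub_add_cancel] at htranslate
  rw [← intervalIntegrable_iff_integrableOn_Ioc_of_le ht.le, htranslate,
    intervalIntegrable_iff_integrableOn_Ioo_of_le (sub_pos.2 ht).le,
    intervalIntegral.integrableOn_Ioo_rpow_iff (sub_pos.2 ht)]

lemma memLp_sub_rpow_Ioc_iff {q r t₀ t₁ : ℝ} (hq : 0 < q) (ht : t₀ < t₁) :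
    MemLp (fun x => (x - t₀) ^ r) (ENNReal.ofReal q) (volume.restrict (Ioc t₀ t₁))
      ↔ -1 < r * q := by
  have hmeas : AEStronglyMeasurable (fun x : ℝ => (x - t₀) ^ r) (volume.restrict (Ioc t₀ t₁)) :=
    ((measurable_id.sub_const t₀).pow_const r).aestronglyMeasurable
  rw [← integrable_norm_rpow_iff hmeas (by simpa) ENNReal.ofReal_ne_top,
    ENNReal.toReal_ofReal hq.le, ← integrableOn_sub_rpow_Ioc_iff ht]
  refine integrableOn_congr_fun (fun x hx => ?_) measurableSet_Ioc
  have hx0 : 0 < x - t₀ := sub_pos.2 hx.1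
  rw [Real.norm_of_nonneg (Real.rpow_nonneg hx0.le r), ← Real.rpow_mul hx0.le]

lemma exists_ofReal_le_one_le_mul {η : ℝ≥0∞} {γ : ℝ} (hη : η ≠ 0) (hγ : 0 < γ)
    (hfin : η ≠ ⊤ → 1 / η.toReal < γ) :
    ∃ q : ℝ, 0 < q ∧ ENNReal.ofReal q ≤ η ∧ 1 ≤ q * γ := by
  rcases eq_or_ne η ⊤ with rfl | hη_top
  · exact ⟨1 / γ, by positivity, le_top, by rw [one_div_mul_cancel hγ.ne']⟩
  · have hq : 0 < η.toReal := ENNReal.toReal_pos hη hη_top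
    refine ⟨η.toReal, hq, (ENNReal.ofReal_toReal hη_top).le, ?_⟩
    have := hfin hη_top
    rw [div_lt_iff₀ hq] at this
    linarith

theorem stmt9_general (p α t₀ t₁ β : ℝ) (η : ℝ≥0∞) (hp : 1 < p) (hα : 0 < α)
    (ht : t₀ < t₁)
    (hη : ENNReal.ofReal (p / (1 - p * α)) < η)
    (hβ1 : β < 1 / p)
    (hβ2 : η ≠ ⊤ → α + 1 / η.toReal < β)
    (hβ3 : η = ⊤ → α < β)
    (f : ℝ → ℝ) (hf : f = fun t => (t - t₀) ^ (-β)) :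
    MemLp f (ENNReal.ofReal p) (volume.restrict (Set.Ioc t₀ t₁)) ∧
    (∀ t ∈ Set.Ioc t₀ t₁,
      RL α t₀ f t = (Real.Gamma (1 - β) / Real.Gamma (1 + α - β)) * (t - t₀) ^ (α - β)) ∧
    ¬ MemLp (RL α t₀ f) η (volume.restrict (Set.Ioc t₀ t₁)) := by
  subst hf
  have hp0 : 0 < p := by linarith
  have hβp : β * p < 1 := (lt_div_iff₀ hp0).1 hβ1
  have hβ : β < 1 := hβ1.trans ((div_lt_one hp0).2 hp)
  have hαβ : α < β := by
    rcases eq_or_ne η ⊤ with h | h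
    · exact hβ3 h
    · linarith [hβ2 h, one_div_nonneg.2 (ENNReal.toReal_nonneg (a := η))]
  have hRL : ∀ t ∈ Ioc t₀ t₁, RL α t₀ (fun s => (s - t₀) ^ (-β)) t
      = (Real.Gamma (1 - β) / Real.Gamma (1 + α - β)) * (t - t₀) ^ (α - β) :=
    fun t htI => RL_sub_rpow_neg hα hβ htI.1
  refine ⟨(memLp_sub_rpow_Ioc_iff hp0 ht).2 (by linarith), hRL, fun hmem => ?_⟩
  obtain ⟨q, hq, hqη, hqβ⟩ := exists_ofReal_le_one_le_mul (pos_of_gt hη).ne'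
    (sub_pos.2 hαβ) fun h => by linarith [hβ2 h]
  set C := Real.Gamma (1 - β) / Real.Gamma (1 + α - β)
  have hC : C ≠ 0 := (div_pos (Real.Gamma_pos_of_pos (by linarith))
    (Real.Gamma_pos_of_pos (by linarith))).ne'
  have hmem_q := (memLp_congr_ae (ae_restrict_of_forall_mem measurableSet_Ioc hRL)).1
    (hmem.mono_exponent hqη)
  have hexp := (memLp_sub_rpow_Ioc_iff (r := α - β) hq ht).1 <| by
    simpa [inv_mul_cancel_left₀ hC] using hmem_q.const_mul C⁻¹
  linarith

theorem stmt9 (p α t₀ t₁ β : ℝ) (η : ℝ≥0∞) (hp : 1 < p) (hα : 0 < α)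
    (hαp : α < 1 / p) (ht : t₀ < t₁)
    (hη : ENNReal.ofReal (p / (1 - p * α)) < η)
    (hβ1 : β < 1 / p)
    (hβ2 : η ≠ ⊤ → α + 1 / η.toReal < β)
    (hβ3 : η = ⊤ → α < β)
    (f : ℝ → ℝ) (hf : f = fun t => (t - t₀) ^ (-β)) :
    MemLp f (ENNReal.ofReal p) (volume.restrict (Set.Ioc t₀ t₁)) ∧
    (∀ t ∈ Set.Ioc t₀ t₁,
      RL α t₀ f t = (Real.Gamma (1 - β) / Real.Gamma (1 + α - β)) * (t - t₀) ^ (α - β)) ∧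
    ¬ MemLp (RL α t₀ f) η (volume.restrict (Set.Ioc t₀ t₁)) :=
  stmt9_general p α t₀ t₁ β η hp hα ht hη hβ1 hβ2 hβ3 f hf
end

section
/- Let p ∈ (1,∞), α ∈ (0,1/p), and η ∈ [1, p/(1-pα)). Choose β with 1/p < β < min{1, α + 1/η}, fix t₀, and define f(t) = 0 for t ∈ [t₀, t₀+1] and f(t) = (t-t₀)^{-β} for t > t₀+1. Then f ∈ L^p(t₀,∞;ℝ) but J^α f ∉ L^η(t₀,∞;ℝ). -/
/-!
On `(t₀ + 1, ∞)` we have `|f|^p = (t - t₀)^(-βp)` with `βp > 1`, so `f ∈ Lᵖ`. For `t ≥ t₀ + 4`,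
restricting the Riemann–Liouville integral to `s ∈ (t₀ + 1, t₀ + (t - t₀)/2)`, where `t - s` and
`s - t₀` are both at most `t - t₀` and both exponents `α - 1`, `-β` are nonpositive, gives
`J^α f(t) ≥ (t - t₀)^(α-β) / (4 Γ(α))`. As `(α - β)η > -1`, this minorant is not `η`-integrable
at infinity.
-/

open MeasureTheory

open Set

theorem integrableOn_Ioi_sub_rpow_iff (c r : ℝ) {a : ℝ} (ha : 0 < a) :
    IntegrableOn (fun t => (t - c) ^ r) (Ioi (c + a)) ↔ r < -1 := by
  rw [add_comm, ← preimage_sub_const_Ioi, ← integrableOn_Ioi_rpow_iff ha]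
  exact (measurePreserving_sub_right volume c).integrableOn_comp_preimage
    (f := fun x : ℝ => x ^ r) (measurableEmbedding_subRight c)

theorem memLp_Ioi_sub_rpow_iff (c r : ℝ) {a p : ℝ} (ha : 0 < a) (hp : 0 < p) :
    MemLp (fun t => (t - c) ^ r) (ENNReal.ofReal p) (volume.restrict (Ioi (c + a))) ↔
      r * p < -1 := by
  have hmeas : AEStronglyMeasurable (fun t : ℝ => (t - c) ^ r) (volume.restrict (Ioi (c + a))) :=
    (by fun_prop : Measurable fun t : ℝ => (t - c) ^ r).aestronglyMeasurable
  rw [← integrable_norm_rpow_iff hmeas (by simpa using hp) ENNReal.ofReal_ne_top,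
    ENNReal.toReal_ofReal hp.le, ← integrableOn_Ioi_sub_rpow_iff c (r * p) ha]
  refine integrableOn_congr_fun (fun t ht => ?_) measurableSet_Ioi
  have hct : 0 ≤ t - c := by linarith [mem_Ioi.mp ht]
  rw [Real.norm_of_nonneg (Real.rpow_nonneg hct r), ← Real.rpow_mul hct]

theorem intervalIntegrable_sub_rpow_mul {α C a t : ℝ} {g : ℝ → ℝ} (hα : 0 < α)
    (hg : AEStronglyMeasurable g) (hgC : ∀ s, ‖g s‖ ≤ C) :
    IntervalIntegrable (fun s => (t - s) ^ (α - 1) * g s) volume a t := by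
  have hkernel : IntervalIntegrable (fun s => (t - s) ^ (α - 1)) volume a t := by
    simpa using (intervalIntegral.intervalIntegrable_rpow' (r := α - 1) (a := t - a) (b := 0)
      (by linarith)).comp_sub_left t
  rw [intervalIntegrable_iff] at hkernel ⊢
  exact hkernel.mul_bdd hg.restrict (Filter.Eventually.of_forall hgC)

noncomputable def tailPow (t₀ β : ℝ) : ℝ → ℝ :=
  (Ioi (t₀ + 1)).indicator fun t => (t - t₀) ^ (-β)

section tailPow

variable {t₀ β : ℝ}

theorem tailPow_of_lt {s : ℝ} (hs : t₀ + 1 < s) : tailPow t₀ β s = (s - t₀) ^ (-β) :=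
  indicator_of_mem hs _

theorem tailPow_of_le {s : ℝ} (hs : s ≤ t₀ + 1) : tailPow t₀ β s = 0 :=
  indicator_of_notMem (s := Ioi (t₀ + 1)) (not_lt.mpr hs) _

theorem measurable_tailPow : Measurable (tailPow t₀ β) :=
  (by fun_prop : Measurable fun t : ℝ => (t - t₀) ^ (-β)).indicator measurableSet_Ioi

theorem tailPow_nonneg (s : ℝ) : 0 ≤ tailPow t₀ β s := by
  rcases lt_or_ge (t₀ + 1) s with hs | hs
  · rw [tailPow_of_lt hs]; exact Real.rpow_nonneg (by linarith) _
  · rw [tailPow_of_le hs]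

theorem tailPow_le_one (hβ : 0 ≤ β) (s : ℝ) : tailPow t₀ β s ≤ 1 := by
  rcases lt_or_ge (t₀ + 1) s with hs | hs
  · rw [tailPow_of_lt hs]
    exact Real.rpow_le_one_of_one_le_of_nonpos (by linarith) (by linarith)
  · rw [tailPow_of_le hs]; exact zero_le_one

theorem memLp_tailPow {p : ℝ} (hp : 0 < p) (hβp : 1 < β * p) :
    MemLp (tailPow t₀ β) (ENNReal.ofReal p) volume := by
  rw [tailPow, memLp_indicator_iff_restrict measurableSet_Ioi,
    memLp_Ioi_sub_rpow_iff t₀ (-β) one_pos hp]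
  linarith

theorem le_integral_sub_rpow_mul_tailPow {α t : ℝ} (hα : 0 < α) (hα1 : α ≤ 1) (hβ : 0 ≤ β)
    (ht : t₀ + 4 ≤ t) :
    (t - t₀) ^ (α - β) / 4 ≤ ∫ s in t₀..t, (t - s) ^ (α - 1) * tailPow t₀ β s := by
  set u := t - t₀
  have hu : 0 < u := by linarith
  have hint : IntervalIntegrable (fun s => (t - s) ^ (α - 1) * tailPow t₀ β s) volume t₀ t :=
    intervalIntegrable_sub_rpow_mul hα measurable_tailPow.aestronglyMeasurable fun s => by
      rw [Real.norm_of_nonneg (tailPow_nonneg s)]; exact tailPow_le_one hβ s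
  have hnonneg : 0 ≤ᵐ[volume.restrict (Ioc t₀ t)] fun s => (t - s) ^ (α - 1) * tailPow t₀ β s := by
    refine (ae_restrict_iff' measurableSet_Ioc).mpr (Filter.Eventually.of_forall fun s hs => ?_)
    exact mul_nonneg (Real.rpow_nonneg (by linarith [hs.2]) _) (tailPow_nonneg s)
  have hsub : uIoc (t₀ + 1) (t₀ + u / 2) ⊆ uIoc t₀ t := by
    rw [uIoc_of_le (by linarith), uIoc_of_le (by linarith)]
    exact Ioc_subset_Ioc (by linarith) (by linarith)
  have hbound : ∀ s ∈ Ioo (t₀ + 1) (t₀ + u / 2),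
      u ^ (α - 1) * u ^ (-β) ≤ (t - s) ^ (α - 1) * tailPow t₀ β s := by
    intro s ⟨hs1, hs2⟩
    rw [tailPow_of_lt hs1]
    gcongr ?_ * ?_
    · exact Real.rpow_nonneg (by linarith) _
    · exact Real.rpow_le_rpow_of_nonpos (by linarith) (by linarith) (by linarith)
    · exact Real.rpow_le_rpow_of_nonpos (by linarith) (by linarith) (by linarith)
  calc (t - t₀) ^ (α - β) / 4
      ≤ (u / 2 - 1) * (u ^ (α - 1) * u ^ (-β)) := by
        rw [← Real.rpow_add hu, show α - β = α - 1 + -β + 1 by ring, Real.rpow_add_one hu.ne']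
        have := Real.rpow_nonneg hu.le (α - 1 + -β)
        nlinarith
    _ = ∫ _ in t₀ + 1..t₀ + u / 2, u ^ (α - 1) * u ^ (-β) := by
        rw [intervalIntegral.integral_const, smul_eq_mul]; ring_nf
    _ ≤ ∫ s in t₀ + 1..t₀ + u / 2, (t - s) ^ (α - 1) * tailPow t₀ β s :=
        intervalIntegral.integral_mono_on_of_le_Ioo (by linarith) intervalIntegrable_const
          (hint.mono_set' hsub) hbound
    _ ≤ ∫ s in t₀..t, (t - s) ^ (α - 1) * tailPow t₀ β s :=
        intervalIntegral.integral_mono_interval (by linarith) (by linarith) (by linarith)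
          hnonneg hint

theorem sub_rpow_le_mul_RL_tailPow {α t : ℝ} (hα : 0 < α) (hα1 : α ≤ 1) (hβ : 0 ≤ β)
    (ht : t₀ + 4 ≤ t) :
    (t - t₀) ^ (α - β) ≤ 4 * Real.Gamma α * RL α t₀ (tailPow t₀ β) t := by
  have hΓ := Real.Gamma_pos_of_pos hα
  have := le_integral_sub_rpow_mul_tailPow hα hα1 hβ ht
  rw [RL, ← mul_assoc, mul_assoc 4, mul_one_div_cancel hΓ.ne']
  linarith

theorem not_memLp_RL_tailPow {α η : ℝ} (hα : 0 < α) (hα1 : α ≤ 1) (hβ : 0 ≤ β) (hη : 0 < η)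
    (hβη : β < α + 1 / η) :
    ¬ MemLp (RL α t₀ (tailPow t₀ β)) (ENNReal.ofReal η) (volume.restrict (Ici t₀)) := by
  intro hRL
  have hRL4 : MemLp (fun t => 4 * Real.Gamma α * RL α t₀ (tailPow t₀ β) t) (ENNReal.ofReal η)
      (volume.restrict (Ioi (t₀ + 4))) :=
    (hRL.mono_measure (Measure.restrict_mono (Ioi_subset_Ici (by linarith)) le_rfl)).const_mul _
  have hpow : MemLp (fun t => (t - t₀) ^ (α - β)) (ENNReal.ofReal η)
      (volume.restrict (Ioi (t₀ + 4))) := by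
    have hmeas : Measurable fun t : ℝ => (t - t₀) ^ (α - β) := by fun_prop
    refine hRL4.of_le hmeas.aestronglyMeasurable
      ((ae_restrict_iff' measurableSet_Ioi).mpr (Filter.Eventually.of_forall fun t ht => ?_))
    rw [Real.norm_of_nonneg (Real.rpow_nonneg (by linarith [mem_Ioi.mp ht]) _)]
    exact (sub_rpow_le_mul_RL_tailPow hα hα1 hβ (le_of_lt ht)).trans (le_abs_self _)
  have hexp := (memLp_Ioi_sub_rpow_iff t₀ (α - β) (by norm_num) hη).mp hpow
  have hlt : (β - α) * η < 1 / η * η := mul_lt_mul_of_pos_right (by linarith) hη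
  rw [one_div_mul_cancel hη.ne'] at hlt
  linarith

end tailPow

theorem stmt11_general (p α η β t₀ : ℝ) (hp : 1 < p) (hα : 0 < α) (hαp : α < 1 / p)
    (hη : 1 ≤ η)
    (hβ1 : 1 / p < β) (hβ2 : β < min 1 (α + 1 / η))
    (f : ℝ → ℝ)
    (hf : f = fun t => if t ≤ t₀ + 1 then 0 else (t - t₀) ^ (-β)) :
    MemLp f (ENNReal.ofReal p) (volume.restrict (Set.Ici t₀)) ∧
    ¬ MemLp (RL α t₀ f) (ENNReal.ofReal η) (volume.restrict (Set.Ici t₀)) := by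
  have hp0 : 0 < p := by linarith
  have hinv_p : 0 < 1 / p ∧ 1 / p < 1 := ⟨by positivity, (div_lt_one hp0).mpr hp⟩
  have hf_eq : f = tailPow t₀ β := by
    ext t
    rcases lt_or_ge (t₀ + 1) t with ht | ht
    · rw [hf, tailPow_of_lt ht]; exact if_neg (not_le.mpr ht)
    · rw [hf, tailPow_of_le ht]; exact if_pos ht
  subst hf_eq
  refine ⟨(memLp_tailPow hp0 ?_).restrict _,
    not_memLp_RL_tailPow hα (by linarith) (by linarith) (by linarith)
      (hβ2.trans_le (min_le_right _ _))⟩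
  rwa [div_lt_iff₀ hp0] at hβ1

theorem stmt11 (p α η β t₀ : ℝ) (hp : 1 < p) (hα : 0 < α) (hαp : α < 1 / p)
    (hη : 1 ≤ η) (hη2 : η < p / (1 - p * α))
    (hβ1 : 1 / p < β) (hβ2 : β < min 1 (α + 1 / η))
    (f : ℝ → ℝ)
    (hf : f = fun t => if t ≤ t₀ + 1 then 0 else (t - t₀) ^ (-β)) :
    MemLp f (ENNReal.ofReal p) (volume.restrict (Set.Ici t₀)) ∧
    ¬ MemLp (RL α t₀ f) (ENNReal.ofReal η) (volume.restrict (Set.Ici t₀)) :=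
  stmt11_general p α η β t₀ hp hα hαp hη hβ1 hβ2 f hf
end

section
/- Let α ∈ (0,1), t₀ < t₁, and fix β ∈ (1, 2-α). Define f : (t₀,t₁] → ℝ by f(t) = (2(t₁-t₀)/(t-t₀)) · (ln(2(t₁-t₀)/(t-t₀)))^{-β}. Then f ∈ L^1(t₀,t₁;ℝ) with ‖f‖_{L^1} = 2(t₁-t₀)(ln 2)^{1-β}/(β-1), but the Riemann–Liouville fractional integral J^α f does not belong to L^{1/(1-α)}(t₀,t₁;ℝ). -/
/-!
With `A = 2 (t₁ - t₀)`, `f` is the derivative of `A log (A / (t - t₀)) ^ (1 - β) / (β - 1)`,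
which is continuous on `[t₀, t₁]` with value `0` at `t₀`; this gives integrability of `f` and
its norm. Since `α ≤ 1`, the kernel satisfies `(t - s) ^ (α - 1) ≥ (t - t₀) ^ (α - 1)`, so
`J^α f (t) ≥ (t - t₀) ^ (α - 1) ∫_{t₀}^t f / Γ(α)`. With `q = 1 / (1 - α)` the `q`-th power of this
bound is a multiple of `(t - t₀)⁻¹ log (A / (t - t₀)) ^ (-γ)`, `γ = (β - 1) q < 1`: the derivative
of a multiple of `log (A / (t - t₀)) ^ (1 - γ)`, which blows up at `t₀`, so it is not integrable.
-/

open MeasureTheory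

open Set Filter Topology Real

section LogSingularity

variable {A t₀ t₁ : ℝ}

theorem hasDerivAt_log_div_sub_rpow (p : ℝ) {t : ℝ} (ht : t₀ < t) (htA : t - t₀ < A) :
    HasDerivAt (fun t => log (A / (t - t₀)) ^ p)
      (-p * ((t - t₀)⁻¹ * log (A / (t - t₀)) ^ (p - 1))) t := by
  have hu : 0 < t - t₀ := sub_pos.2 ht
  have hA : 0 < A := hu.trans htA
  have hlog : HasDerivAt (fun t => log (A / (t - t₀))) (-(t - t₀)⁻¹) t := by
    have h := (((hasDerivAt_id t).sub_const t₀).log hu.ne').const_sub (log A)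
    refine (h.congr_of_eventuallyEq ?_).congr_deriv (by simp)
    filter_upwards [eventually_gt_nhds ht] with s hs
    rw [log_div hA.ne' (sub_pos.2 hs).ne', id]
  convert hlog.rpow_const (p := p) (Or.inl (log_pos ((one_lt_div hu).2 htA)).ne') using 1
  ring

theorem tendsto_log_div_sub_nhdsGT (hA : 0 < A) :
    Tendsto (fun t => log (A / (t - t₀))) (𝓝[>] t₀) atTop := by
  have hsub : Tendsto (fun t => t - t₀) (𝓝[>] t₀) (𝓝[>] 0) :=
    tendsto_nhdsWithin_iff.2 ⟨tendsto_nhdsWithin_of_tendsto_nhds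
      (by simpa using (continuous_sub_right t₀).tendsto t₀),
      eventually_mem_nhdsWithin.mono fun t ht => mem_Ioi.2 (sub_pos.2 ht)⟩
  exact tendsto_log_atTop.comp
    (by simpa [div_eq_mul_inv] using hsub.inv_tendsto_nhdsGT_zero.const_mul_atTop hA)

-- At `t₀` the junk value `log (A / 0) ^ p = log 0 ^ p = 0` is also the limit from the right.
theorem continuousOn_log_div_sub_rpow {p : ℝ} (hA : t₁ - t₀ < A) (hp : p < 0) :
    ContinuousOn (fun t => log (A / (t - t₀)) ^ p) (Icc t₀ t₁) := by
  rintro t ⟨ht₀, ht₁⟩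
  rcases ht₀.eq_or_lt with rfl | ht₀
  · have hlim : Tendsto (fun t => log (A / (t - t₀)) ^ p) (𝓝[>] t₀) (𝓝 0) :=
      (tendsto_rpow_neg_atTop (y := -p) (by linarith)).comp
        (tendsto_log_div_sub_nhdsGT (A := A) (by linarith)) |>.congr fun t => by simp
    have hcont : ContinuousWithinAt (fun t => log (A / (t - t₀)) ^ p) (Ioi t₀) t₀ := by
      simpa [ContinuousWithinAt, zero_rpow hp.ne] using hlim
    exact hcont.insert.mono fun s hs => hs.1.eq_or_lt.imp Eq.symm id
  · exact (hasDerivAt_log_div_sub_rpow p ht₀ (by linarith)).continuousAt.continuousWithinAt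

theorem inv_sub_mul_log_div_sub_rpow_nonneg (p : ℝ) {t : ℝ} (ht : t₀ < t) (htA : t - t₀ ≤ A) :
    0 ≤ (t - t₀)⁻¹ * log (A / (t - t₀)) ^ p := by
  have hu : 0 < t - t₀ := sub_pos.2 ht
  exact mul_nonneg (inv_nonneg.2 hu.le) (rpow_nonneg (log_nonneg ((one_le_div hu).2 htA)) p)

theorem hasDerivAt_log_div_sub_rpow_one_sub {β t : ℝ} (hβ : 1 < β) (ht : t₀ < t)
    (htA : t - t₀ < A) :
    HasDerivAt (fun t => log (A / (t - t₀)) ^ (1 - β) / (β - 1))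
      ((t - t₀)⁻¹ * log (A / (t - t₀)) ^ (-β)) t := by
  refine ((hasDerivAt_log_div_sub_rpow (1 - β) ht htA).div_const (β - 1)).congr_deriv ?_
  rw [show 1 - β - 1 = -β by ring]
  field_simp [(sub_pos.2 hβ).ne']
  ring

theorem continuousOn_inv_sub_mul_log_div_sub_rpow (p : ℝ) (hA : t₁ - t₀ < A) :
    ContinuousOn (fun t => (t - t₀)⁻¹ * log (A / (t - t₀)) ^ p) (Ioc t₀ t₁) := fun t ht =>
  (((continuousAt_id.sub continuousAt_const).inv₀ (sub_pos.2 ht.1).ne').mul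
    (hasDerivAt_log_div_sub_rpow p ht.1 (by linarith [ht.2])).continuousAt).continuousWithinAt

theorem integrableOn_inv_sub_mul_log_div_sub_rpow {β : ℝ} (hβ : 1 < β) (hA : t₁ - t₀ < A) :
    IntegrableOn (fun t => (t - t₀)⁻¹ * log (A / (t - t₀)) ^ (-β)) (Ioc t₀ t₁) :=
  intervalIntegral.integrableOn_deriv_of_nonneg
    ((continuousOn_log_div_sub_rpow hA (by linarith)).div_const _)
    (fun _ ht => hasDerivAt_log_div_sub_rpow_one_sub hβ ht.1 (by linarith [ht.2]))
    (fun _ ht => inv_sub_mul_log_div_sub_rpow_nonneg _ ht.1 (by linarith [ht.2]))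

theorem integral_inv_sub_mul_log_div_sub_rpow {β : ℝ} (hβ : 1 < β) (ht : t₀ ≤ t₁)
    (hA : t₁ - t₀ < A) :
    ∫ t in t₀..t₁, (t - t₀)⁻¹ * log (A / (t - t₀)) ^ (-β) =
      log (A / (t₁ - t₀)) ^ (1 - β) / (β - 1) := by
  rw [intervalIntegral.integral_eq_sub_of_hasDerivAt_of_le ht
    ((continuousOn_log_div_sub_rpow hA (by linarith)).div_const _)
    (fun _ ht => hasDerivAt_log_div_sub_rpow_one_sub hβ ht.1 (by linarith [ht.2]))
    ((intervalIntegrable_iff_integrableOn_Ioc_of_le ht).2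
      (integrableOn_inv_sub_mul_log_div_sub_rpow hβ hA))]
  simp [zero_rpow (show 1 - β ≠ 0 by linarith)]

theorem not_integrableOn_inv_sub_mul_log_div_sub_rpow {γ : ℝ} (hA : 0 < A) (hγ : γ < 1)
    (ht : t₀ < t₁) :
    ¬ IntegrableOn (fun t => (t - t₀)⁻¹ * log (A / (t - t₀)) ^ (-γ)) (Ioc t₀ t₁) := by
  have hderiv : ∀ᶠ t in 𝓝[>] t₀, HasDerivAt (fun t => log (A / (t - t₀)) ^ (1 - γ))
      (-(1 - γ) * ((t - t₀)⁻¹ * log (A / (t - t₀)) ^ (-γ))) t := by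
    filter_upwards [self_mem_nhdsWithin,
      nhdsWithin_le_nhds (eventually_lt_nhds (show t₀ < t₀ + A by linarith))] with t ht htA
    simpa using hasDerivAt_log_div_sub_rpow (1 - γ) ht (by linarith)
  refine not_integrableOn_of_tendsto_norm_atTop_of_deriv_isBigO_filter _ (Ioc_mem_nhdsGT ht)
    (hderiv.mono fun _ h => h.differentiableAt) ?_
    (EventuallyEq.trans_isBigO (hderiv.mono fun _ h => h.deriv)
      (Asymptotics.isBigO_const_mul_self _ _ _))
  exact tendsto_norm_atTop_atTop.comp
    ((tendsto_rpow_atTop (by linarith)).comp (tendsto_log_div_sub_nhdsGT hA))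

end LogSingularity

section RiemannLiouville

variable {f : ℝ → ℝ} {α a t : ℝ}

/-- The kernel is bounded away from `t` and integrable near `t`, where `f` is bounded. -/
theorem integrableOn_rpow_sub_mul {m : ℝ} (hα : 0 < α) (hmt : m < t)
    (hf : IntegrableOn f (Ioc a m)) (hfc : ContinuousOn f (Icc m t)) :
    IntegrableOn (fun s => (t - s) ^ (α - 1) * f s) (Ioc a t) := by
  have hleft : IntegrableOn (fun s => (t - s) ^ (α - 1) * f s) (Icc a m) := by
    refine IntegrableOn.continuousOn_mul ?_
      ((integrableOn_Icc_iff_integrableOn_Ioc enorm_ne_top).2 hf) isCompact_Icc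
    exact (continuousOn_const.sub continuousOn_id).rpow_const fun s hs =>
      Or.inl (sub_pos.2 (hs.2.trans_lt hmt)).ne'
  have hkernel : IntegrableOn (fun s => (t - s) ^ (α - 1)) (Icc m t) := by
    have h := (intervalIntegral.intervalIntegrable_rpow' (a := t - m) (b := 0)
      (r := α - 1) (by linarith)).comp_sub_left t
    simp only [sub_sub_cancel, sub_zero] at h
    exact (integrableOn_Icc_iff_integrableOn_Ioc enorm_ne_top).2
      ((intervalIntegrable_iff_integrableOn_Ioc_of_le hmt.le).1 h)
  refine (hleft.union (hkernel.mul_continuousOn hfc isCompact_Icc)).mono_set fun s hs => ?_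
  rcases le_or_gt s m with hsm | hsm
  · exact Or.inl ⟨hs.1.le, hsm⟩
  · exact Or.inr ⟨hsm.le, hs.2⟩

/-- For `α ≤ 1` the kernel `(t - s) ^ (α - 1)` is smallest at `s = a`. -/
theorem rpow_sub_mul_integral_div_Gamma_le_RL (hα : 0 < α) (hα1 : α ≤ 1) (hat : a < t)
    (hf0 : ∀ s ∈ Ioo a t, 0 ≤ f s) (hf : IntegrableOn f (Ioc a t))
    (hfc : ContinuousOn f (Ioc a t)) :
    (t - a) ^ (α - 1) * (∫ s in a..t, f s) / Gamma α ≤ RL α a f t := by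
  have hker : IntegrableOn (fun s => (t - s) ^ (α - 1) * f s) (Ioc a t) :=
    integrableOn_rpow_sub_mul (m := (a + t) / 2) hα (by linarith)
      (hf.mono_set (Ioc_subset_Ioc_right (by linarith)))
      (hfc.mono (Icc_subset_Ioc (by linarith) le_rfl))
  have hmono : ∫ s in Ioo a t, (t - a) ^ (α - 1) * f s ≤
      ∫ s in Ioo a t, (t - s) ^ (α - 1) * f s := by
    refine setIntegral_mono_on (IntegrableOn.mono_set (hf.const_mul _) Ioo_subset_Ioc_self)
      (hker.mono_set Ioo_subset_Ioc_self) measurableSet_Ioo fun s hs => ?_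
    exact mul_le_mul_of_nonneg_right
      (rpow_le_rpow_of_nonpos (sub_pos.2 hs.2) (by linarith [hs.1]) (by linarith)) (hf0 s hs)
  rw [RL, intervalIntegral.integral_of_le hat.le, intervalIntegral.integral_of_le hat.le,
    integral_Ioc_eq_integral_Ioo, integral_Ioc_eq_integral_Ioo, ← integral_const_mul,
    one_div, div_eq_inv_mul]
  exact mul_le_mul_of_nonneg_left hmono (inv_nonneg.2 (Gamma_pos_of_pos hα).le)

end RiemannLiouville

theorem le_norm_RL_rpow {α β A t₀ t : ℝ} (hα : 0 < α) (hα1 : α < 1) (hβ : 1 < β) (ht : t₀ < t)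
    (hA : t - t₀ < A) :
    (A / ((β - 1) * Gamma α)) ^ (1 / (1 - α)) *
        ((t - t₀)⁻¹ * log (A / (t - t₀)) ^ (-((β - 1) / (1 - α)))) ≤
      ‖RL α t₀ (fun s => A * ((s - t₀)⁻¹ * log (A / (s - t₀)) ^ (-β))) t‖ ^ (1 / (1 - α)) := by
  have hu : 0 < t - t₀ := sub_pos.2 ht
  have hA0 : 0 < A := hu.trans hA
  have hℓ : 0 ≤ log (A / (t - t₀)) := log_nonneg ((one_le_div hu).2 hA.le)
  have hα₁ : 0 < 1 - α := by linarith
  have hβ₁ : 0 < β - 1 := by linarith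
  have hΓ : 0 < Gamma α := Gamma_pos_of_pos hα
  have hlow := rpow_sub_mul_integral_div_Gamma_le_RL hα hα1.le ht
    (fun s hs => mul_nonneg hA0.le
      (inv_sub_mul_log_div_sub_rpow_nonneg _ hs.1 (by linarith [hs.2])))
    ((integrableOn_inv_sub_mul_log_div_sub_rpow hβ hA).const_mul A)
    ((continuousOn_inv_sub_mul_log_div_sub_rpow _ hA).const_smul A)
  rw [intervalIntegral.integral_const_mul, integral_inv_sub_mul_log_div_sub_rpow hβ ht.le hA]
    at hlow
  calc _ = ((A / ((β - 1) * Gamma α)) *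
          ((t - t₀) ^ (α - 1) * log (A / (t - t₀)) ^ (1 - β))) ^ (1 / (1 - α)) := by
        rw [mul_rpow (by positivity) (by positivity), mul_rpow (by positivity) (by positivity),
          ← rpow_mul hu.le, ← rpow_mul hℓ, show (α - 1) * (1 / (1 - α)) = -1 by field_simp; ring,
          show (1 - β) * (1 / (1 - α)) = -((β - 1) / (1 - α)) by field_simp; ring, rpow_neg_one]
    _ = ((t - t₀) ^ (α - 1) * (A * (log (A / (t - t₀)) ^ (1 - β) / (β - 1))) / Gamma α) ^
          (1 / (1 - α)) := by
        congr 1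
        field_simp
    _ ≤ ‖RL α t₀ (fun s => A * ((s - t₀)⁻¹ * log (A / (s - t₀)) ^ (-β))) t‖ ^ (1 / (1 - α)) :=
      rpow_le_rpow (by have := rpow_nonneg hℓ (1 - β); positivity) (hlow.trans (le_abs_self _))
        (by positivity)

theorem not_memLp_RL_mul_inv_sub_mul_log_div_sub_rpow {α β A t₀ t₁ : ℝ} (hα : 0 < α)
    (hα1 : α < 1) (hβ1 : 1 < β) (hβ2 : β < 2 - α) (ht : t₀ < t₁) (hA : t₁ - t₀ < A) :
    ¬ MemLp (RL α t₀ fun t => A * ((t - t₀)⁻¹ * log (A / (t - t₀)) ^ (-β)))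
      (ENNReal.ofReal (1 / (1 - α))) (volume.restrict (Ioc t₀ t₁)) := by
  intro hmem
  set q := 1 / (1 - α)
  set γ := (β - 1) / (1 - α)
  set c := (A / ((β - 1) * Gamma α)) ^ q
  have hα₁ : 0 < 1 - α := by linarith
  have hβ₁ : 0 < β - 1 := by linarith
  have hq : 0 < q := by positivity
  have hA0 : 0 < A := by linarith
  have hc : 0 < c := by have := Gamma_pos_of_pos hα; positivity
  have hRL := hmem.integrable_norm_rpow (by simpa using hq) ENNReal.ofReal_ne_top
  rw [ENNReal.toReal_ofReal hq.le] at hRL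
  have hmeas : Measurable fun t => c * ((t - t₀)⁻¹ * log (A / (t - t₀)) ^ (-γ)) := by fun_prop
  refine not_integrableOn_inv_sub_mul_log_div_sub_rpow (γ := γ) hA0
    ((div_lt_one hα₁).2 (by linarith)) ht
    ((integrable_const_mul_iff (IsUnit.mk0 c hc.ne') _).1
      (hRL.mono' hmeas.aestronglyMeasurable ?_))
  refine ae_restrict_of_forall_mem measurableSet_Ioc fun t ht => ?_
  rw [norm_of_nonneg
    (mul_nonneg hc.le (inv_sub_mul_log_div_sub_rpow_nonneg _ ht.1 (by linarith [ht.2])))]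
  exact le_norm_RL_rpow hα hα1 hβ1 ht.1 (by linarith [ht.2])

theorem stmt13 (α β t₀ t₁ : ℝ) (hα : 0 < α) (hα1 : α < 1) (ht : t₀ < t₁)
    (hβ1 : 1 < β) (hβ2 : β < 2 - α)
    (f : ℝ → ℝ)
    (hf : f = fun t => (2 * (t₁ - t₀) / (t - t₀)) *
      (Real.log (2 * (t₁ - t₀) / (t - t₀))) ^ (-β)) :
    IntegrableOn f (Set.Ioc t₀ t₁) ∧
    (∫ t in Set.Ioc t₀ t₁, |f t|) =
      2 * (t₁ - t₀) * (Real.log 2) ^ (1 - β) / (β - 1) ∧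
    ¬ MemLp (RL α t₀ f) (ENNReal.ofReal (1 / (1 - α)))
        (volume.restrict (Set.Ioc t₀ t₁)) := by
  set A := 2 * (t₁ - t₀) with hAdef
  have hA : t₁ - t₀ < A := by linarith
  obtain rfl : f = fun t => A * ((t - t₀)⁻¹ * log (A / (t - t₀)) ^ (-β)) := by
    rw [hf]; funext t; ring
  have hf0 : ∀ t ∈ Ioc t₀ t₁, 0 ≤ A * ((t - t₀)⁻¹ * log (A / (t - t₀)) ^ (-β)) := fun t ht =>
    mul_nonneg (by linarith) (inv_sub_mul_log_div_sub_rpow_nonneg _ ht.1 (by linarith [ht.2]))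
  refine ⟨(integrableOn_inv_sub_mul_log_div_sub_rpow hβ1 hA).const_mul A, ?_, ?_⟩
  · rw [setIntegral_congr_fun measurableSet_Ioc fun t ht => abs_of_nonneg (hf0 t ht),
      ← intervalIntegral.integral_of_le ht.le, intervalIntegral.integral_const_mul,
      integral_inv_sub_mul_log_div_sub_rpow hβ1 ht.le hA,
      show A / (t₁ - t₀) = 2 by rw [hAdef]; field_simp [(sub_pos.2 ht).ne']]
    ring
  exact not_memLp_RL_mul_inv_sub_mul_log_div_sub_rpow hα hα1 hβ1 hβ2 ht hA
end
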